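/- arXiv:1606.09374 — 2 statements merged into one kernel-verified Lean document; each statement's English description precedes it below -/
import Mathlib

section
/- Let (X, μ) be a probability measure space where X is a compact metric space with Borel σ-algebra, and let (S_n) be a sequence of measure-preserving transformations of X such that for every Borel set A, μ(S_n⁻¹A Δ A) → 0 as n → ∞. Then S_n → Id in measure, i.e., for every ε > 0, μ({x : d(x, S_n x) ≥ ε}) → 0. -/
open MeasureTheory Filter Topology

/- A point moved by at least `ε` cannot stay in a ball of radius `ε / 2` around any centre,
so the set of such points is covered, for every finite `ε / 2`-net, by the symmetric differences
`S n ⁻¹' B Δ B` of the net's balls `B`; each of these finitely many measures tends to `0`. -/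

theorem MeasureTheory.tendsto_measure_biUnion_finset_of_tendsto_zero {α β ι : Type*}
    [MeasurableSpace α] (μ : Measure α) {l : Filter β} (I : Finset ι) {s : β → ι → Set α}
    (hs : ∀ i ∈ I, Tendsto (fun n => μ (s n i)) l (𝓝 0)) :
    Tendsto (fun n => μ (⋃ i ∈ I, s n i)) l (𝓝 0) := by
  have hsum : Tendsto (fun n => ∑ i ∈ I, μ (s n i)) l (𝓝 0) := by
    simpa using tendsto_finsetSum I hs
  exact tendsto_of_tendsto_of_tendsto_of_le_of_le tendsto_const_nhds hsum
    (fun _ => zero_le) (fun n => measure_biUnion_finset_le I (s n))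

section Displacement

variable {X : Type*} [PseudoMetricSpace X]

theorem mem_symmDiff_preimage_ball_of_le_dist {f : X → X} {x c : X} {ε : ℝ}
    (hx : x ∈ Metric.ball c (ε / 2)) (hfx : ε ≤ dist x (f x)) :
    x ∈ symmDiff (f ⁻¹' Metric.ball c (ε / 2)) (Metric.ball c (ε / 2)) := by
  refine Or.inr ⟨hx, fun hfx' => hfx.not_gt ?_⟩
  rw [Metric.mem_ball] at hx
  rw [Set.mem_preimage, Metric.mem_ball] at hfx'
  calc dist x (f x) ≤ dist x c + dist (f x) c := dist_triangle_right _ _ _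
    _ < ε / 2 + ε / 2 := add_lt_add hx hfx'
    _ = ε := add_halves ε

theorem setOf_le_dist_subset_iUnion_symmDiff_preimage_ball {t : Finset X} {ε : ℝ}
    (ht : Set.univ ⊆ ⋃ c ∈ t, Metric.ball c (ε / 2)) (f : X → X) :
    {x | ε ≤ dist x (f x)} ⊆
      ⋃ c ∈ t, symmDiff (f ⁻¹' Metric.ball c (ε / 2)) (Metric.ball c (ε / 2)) := by
  intro x hx
  obtain ⟨c, hc, hxc⟩ := Set.mem_iUnion₂.1 (ht (Set.mem_univ x))
  exact Set.mem_iUnion₂.2 ⟨c, hc, mem_symmDiff_preimage_ball_of_le_dist hxc hx⟩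

end Displacement

theorem tendsto_id_in_measure_of_weak_convergence_general {X : Type*} [MetricSpace X] [CompactSpace X]
    [MeasurableSpace X] [BorelSpace X] (μ : Measure X)
    (S : ℕ → X → X)
    (h : ∀ A : Set X, MeasurableSet A →
      Tendsto (fun n => μ (symmDiff (S n ⁻¹' A) A)) atTop (𝓝 0)) :
    ∀ ε > 0, Tendsto (fun n => μ {x | ε ≤ dist x (S n x)}) atTop (𝓝 0) := by
  intro ε hε
  obtain ⟨t, -, htfin, hcover⟩ :=
    finite_cover_balls_of_compact (isCompact_univ (X := X)) (half_pos hε)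
  have hcover' : Set.univ ⊆ ⋃ c ∈ htfin.toFinset, Metric.ball c (ε / 2) := by
    simpa only [Set.Finite.mem_toFinset] using hcover
  have hunion := tendsto_measure_biUnion_finset_of_tendsto_zero μ htfin.toFinset
    (fun c _ => h (Metric.ball c (ε / 2)) measurableSet_ball)
  exact tendsto_of_tendsto_of_tendsto_of_le_of_le tendsto_const_nhds hunion (fun _ => zero_le)
    (fun n => measure_mono (setOf_le_dist_subset_iUnion_symmDiff_preimage_ball hcover' (S n)))

theorem tendsto_id_in_measure_of_weak_convergence {X : Type*} [MetricSpace X] [CompactSpace X]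
    [MeasurableSpace X] [BorelSpace X] (μ : Measure X) [IsProbabilityMeasure μ]
    (S : ℕ → X → X) (hS : ∀ n, MeasurePreserving (S n) μ μ)
    (h : ∀ A : Set X, MeasurableSet A →
      Tendsto (fun n => μ (symmDiff (S n ⁻¹' A) A)) atTop (𝓝 0)) :
    ∀ ε > 0, Tendsto (fun n => μ {x | ε ≤ dist x (S n x)}) atTop (𝓝 0) :=
  tendsto_id_in_measure_of_weak_convergence_general μ S h
end

section
/- Let T be an ergodic measure-preserving transformation of a probability space (X, B, μ). For every Borel set A with μ(A) ≥ 1 − 10⁻⁴ and every κ > 0, there exist a measurable set V ⊆ X with μ(V) > 0.99 and N₁ ∈ ℕ such that for all integers M, L ≥ N₁ with L/M ≥ κ and all x ∈ V: (1/L)·|{n ∈ [M, M+L] ∩ ℤ : Tⁿ x ∈ A}| ≥ 0.99. -/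
open MeasureTheory Filter Topology
open scoped Classical

/-!
Birkhoff's pointwise ergodic theorem, for integrable `g` and ergodic `T`, follows from Garsia's
maximal inequality `0 ≤ ∫_{∃ n, S_n g > 0} g`: if `∫ g < 0`, the set where the Birkhoff sums
`S_n g` are bounded above is `T`-invariant, hence null or conull, and it cannot be null because the
maximal inequality would then give `0 ≤ ∫ g`. Applied to `g - a` for `a > ∫ g`, and likewise to
`-g`, this gives `S_n g / n → ∫ g` a.e. For `g = 1_A`, Egorov's theorem makes the convergence
uniform on a set `V` of measure `> 0.99`. If the averages at times `M` and `M + L + 1` are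
`δ`-close to `μ(A)`, the number `S_{M+L+1} - S_M` of visits to `A` during `[M, M + L]` is at least
`μ(A) (L + 1) - δ (2M + L + 1)`, and `κ M ≤ L` bounds the error by `2δ (1 + 1/κ) L`.
-/

section BirkhoffSum

variable {X : Type*}

lemma partialSups_birkhoffSum_nonneg (T : X → X) (g : X → ℝ) (N : ℕ) (x : X) :
    0 ≤ partialSups (birkhoffSum T g) N x := by
  simpa using le_partialSups_of_le (birkhoffSum T g) N.zero_le x

lemma partialSups_birkhoffSum_le (T : X → X) (g : X → ℝ) (N : ℕ) (x : X) :
    partialSups (birkhoffSum T g) N x ≤ max 0 (g x + partialSups (birkhoffSum T g) N (T x)) := by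
  rw [Pi.partialSups_apply]
  refine partialSups_le _ _ _ fun j hj => ?_
  cases j with
  | zero => simp
  | succ j =>
    rw [birkhoffSum_succ']
    refine le_max_of_le_right (add_le_add_right ?_ _)
    rw [Pi.partialSups_apply]
    exact le_partialSups_of_le (birkhoffSum T g · (T x)) (by omega)

lemma bddAbove_range_birkhoffSum_apply_iff (T : X → X) (g : X → ℝ) (x : X) :
    BddAbove (Set.range fun n => birkhoffSum T g n (T x)) ↔
      BddAbove (Set.range fun n => birkhoffSum T g n x) := by
  constructor
  · rintro ⟨C, hC⟩
    refine ⟨max 0 (g x + C), Set.forall_mem_range.2 fun n => ?_⟩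
    cases n with
    | zero => simp
    | succ n =>
      rw [birkhoffSum_succ']
      exact le_max_of_le_right (add_le_add_right (hC ⟨n, rfl⟩) _)
  · rintro ⟨C, hC⟩
    refine ⟨C - g x, Set.forall_mem_range.2 fun n => ?_⟩
    have : birkhoffSum T g (n + 1) x ≤ C := hC ⟨n + 1, rfl⟩
    rw [birkhoffSum_succ'] at this
    linarith

lemma birkhoffSum_sub_const (T : X → X) (g : X → ℝ) (b : ℝ) (n : ℕ) (x : X) :
    birkhoffSum T (fun y => g y - b) n x = birkhoffSum T g n x - n * b := by
  simp [birkhoffSum, Finset.sum_sub_distrib, mul_comm]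

end BirkhoffSum

section ErgodicTheorem

variable {X : Type*} [MeasurableSpace X] {μ : Measure X} {T : X → X} {g : X → ℝ}

lemma measurable_birkhoffSum (hT : Measurable T) (hg : Measurable g) (n : ℕ) :
    Measurable (birkhoffSum T g n) :=
  Finset.measurable_sum _ fun k _ => hg.comp (hT.iterate k)

lemma MeasureTheory.MeasurePreserving.integrable_birkhoffSum (hT : MeasurePreserving T μ μ)
    (hg : Integrable g μ) (n : ℕ) : Integrable (birkhoffSum T g n) μ :=
  integrable_finsetSum _ fun k _ => (hT.iterate k).integrable_comp_of_integrable hg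

lemma measurable_partialSups_birkhoffSum (hT : Measurable T) (hg : Measurable g) (N : ℕ) :
    Measurable (partialSups (birkhoffSum T g) N) := by
  rw [partialSups_apply]
  exact Finset.sup'_induction (p := Measurable) _ _ (fun _ h₁ _ h₂ => h₁.sup h₂)
    fun n _ => measurable_birkhoffSum hT hg n

lemma MeasureTheory.MeasurePreserving.integrable_partialSups_birkhoffSum
    (hT : MeasurePreserving T μ μ) (hg : Integrable g μ) (N : ℕ) :
    Integrable (partialSups (birkhoffSum T g) N) μ := by
  rw [partialSups_apply]
  exact Finset.sup'_induction (p := (Integrable · μ)) _ _ (fun _ h₁ _ h₂ => h₁.sup h₂)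
    fun n _ => hT.integrable_birkhoffSum hg n

/-- Garsia's argument: `F := max_{n ≤ N} S_n g` is nonnegative, `F - F ∘ T ≤ g` on `{F > 0}`,
`F - F ∘ T ≤ 0` off it, and `∫ (F - F ∘ T) = 0` by invariance of `μ`. -/
lemma MeasureTheory.MeasurePreserving.setIntegral_partialSups_birkhoffSum_pos_nonneg
    (hT : MeasurePreserving T μ μ) (hg : Measurable g) (hgi : Integrable g μ) (N : ℕ) :
    0 ≤ ∫ x in {x | 0 < partialSups (birkhoffSum T g) N x}, g x ∂μ := by
  set F := partialSups (birkhoffSum T g) N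
  set E := {x | 0 < F x}
  have hFm : Measurable F := measurable_partialSups_birkhoffSum hT.measurable hg N
  have hEm : MeasurableSet E := measurableSet_lt measurable_const hFm
  have hFi : Integrable F μ := hT.integrable_partialSups_birkhoffSum hgi N
  have hFTi : Integrable (fun x => F (T x)) μ := hT.integrable_comp_of_integrable hFi
  have hdi : Integrable (fun x => F x - F (T x)) μ := hFi.sub hFTi
  have h_int : ∫ x, (F x - F (T x)) ∂μ = 0 := by
    rw [integral_sub hFi hFTi, ← integral_map hT.aemeasurable hFm.aestronglyMeasurable,
      hT.map_eq, sub_self]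
  have h_off : ∫ x in Eᶜ, (F x - F (T x)) ∂μ ≤ 0 := by
    refine setIntegral_nonpos hEm.compl fun x hx => ?_
    have hFx : F x = 0 := le_antisymm (not_lt.mp hx) (partialSups_birkhoffSum_nonneg T g N x)
    linarith [partialSups_birkhoffSum_nonneg T g N (T x)]
  have h_on : ∀ x ∈ E, F x - F (T x) ≤ g x := fun x hx => by
    have := (le_max_iff.mp (partialSups_birkhoffSum_le T g N x)).resolve_left (not_le.mpr hx)
    linarith
  calc 0 ≤ ∫ x in E, (F x - F (T x)) ∂μ := by
        linarith [integral_add_compl hEm hdi]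
    _ ≤ ∫ x in E, g x ∂μ := setIntegral_mono_on hdi.integrableOn hgi.integrableOn hEm h_on

lemma MeasureTheory.MeasurePreserving.setIntegral_exists_birkhoffSum_pos_nonneg
    (hT : MeasurePreserving T μ μ) (hg : Measurable g) (hgi : Integrable g μ) :
    0 ≤ ∫ x in {x | ∃ n, 0 < birkhoffSum T g n x}, g x ∂μ := by
  set E : ℕ → Set X := fun N => {x | 0 < partialSups (birkhoffSum T g) N x}
  have hEm : ∀ N, MeasurableSet (E N) := fun N =>
    measurableSet_lt measurable_const (measurable_partialSups_birkhoffSum hT.measurable hg N)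
  have hE_mono : Monotone E := fun N N' h x hx =>
    hx.trans_le (partialSups_monotone (birkhoffSum T g) h x)
  have hE_union : ⋃ N, E N = {x | ∃ n, 0 < birkhoffSum T g n x} := by
    ext x
    simp only [E, Set.mem_iUnion, Set.mem_ofPred_eq]
    constructor
    · rintro ⟨N, hN⟩
      by_contra! h
      rw [Pi.partialSups_apply] at hN
      exact hN.not_ge (partialSups_le _ N 0 fun n _ => h n)
    · rintro ⟨n, hn⟩
      exact ⟨n, hn.trans_le (le_partialSups (birkhoffSum T g) n x)⟩
  have h_lim := tendsto_setIntegral_of_monotone hEm hE_mono hgi.integrableOn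
  rw [hE_union] at h_lim
  exact ge_of_tendsto' h_lim fun N => hT.setIntegral_partialSups_birkhoffSum_pos_nonneg hg hgi N

lemma Ergodic.ae_bddAbove_birkhoffSum_of_integral_neg (hT : Ergodic T μ) (hg : Measurable g)
    (hgi : Integrable g μ) (hneg : ∫ x, g x ∂μ < 0) :
    ∀ᵐ x ∂μ, BddAbove (Set.range fun n => birkhoffSum T g n x) := by
  set D := {x | BddAbove (Set.range fun n => birkhoffSum T g n x)}
  have hDm : MeasurableSet D :=
    measurableSet_bddAbove_range (measurable_birkhoffSum hT.measurable hg)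
  have hDinv : T ⁻¹' D = D := Set.ext fun x => bddAbove_range_birkhoffSum_apply_iff T g x
  refine (hT.toPreErgodic.ae_mem_or_ae_notMem hDm hDinv).resolve_right fun h_unbdd => ?_
  have h_pos : ∀ᵐ x ∂μ, x ∈ {x | ∃ n, 0 < birkhoffSum T g n x} := by
    filter_upwards [h_unbdd] with x hx
    obtain ⟨_, ⟨n, rfl⟩, hn⟩ := not_bddAbove_iff.1 hx 0
    exact ⟨n, hn⟩
  have := hT.toMeasurePreserving.setIntegral_exists_birkhoffSum_pos_nonneg hg hgi
  rw [Measure.restrict_eq_self_of_ae_mem h_pos] at this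
  linarith

lemma Ergodic.ae_eventually_birkhoffAverage_lt [IsProbabilityMeasure μ] (hT : Ergodic T μ)
    (hg : Measurable g) (hgi : Integrable g μ) {a : ℝ} (ha : ∫ x, g x ∂μ < a) :
    ∀ᵐ x ∂μ, ∀ᶠ n in atTop, birkhoffAverage ℝ T g n x < a := by
  obtain ⟨b, hgb, hba⟩ := exists_between ha
  have hneg : ∫ x, (g x - b) ∂μ < 0 := by
    rw [integral_sub hgi (integrable_const b)]
    simpa using hgb
  filter_upwards [hT.ae_bddAbove_birkhoffSum_of_integral_neg (hg.sub_const b)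
    (hgi.sub (integrable_const b)) hneg] with x ⟨C, hC⟩
  have h_lim : Tendsto (fun n : ℕ => b + C / n) atTop (𝓝 b) := by
    simpa using tendsto_const_nhds.add (tendsto_const_div_atTop_nhds_zero_nat C)
  filter_upwards [h_lim.eventually (gt_mem_nhds hba), eventually_gt_atTop 0] with n hn hn₀
  have hC_n : birkhoffSum T g n x - n * b ≤ C := by
    simpa [birkhoffSum_sub_const] using hC ⟨n, rfl⟩
  have hn₀' : (0 : ℝ) < n := Nat.cast_pos.2 hn₀
  calc birkhoffAverage ℝ T g n x = birkhoffSum T g n x / n := by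
        rw [birkhoffAverage, smul_eq_mul, inv_mul_eq_div]
    _ ≤ b + C / n := by
        rw [div_le_iff₀ hn₀', add_mul, div_mul_cancel₀ _ hn₀'.ne']
        linarith
    _ < a := hn

theorem Ergodic.ae_tendsto_birkhoffAverage [IsProbabilityMeasure μ] (hT : Ergodic T μ)
    (hg : Measurable g) (hgi : Integrable g μ) :
    ∀ᵐ x ∂μ, Tendsto (fun n => birkhoffAverage ℝ T g n x) atTop (𝓝 (∫ x, g x ∂μ)) := by
  have h_upper : ∀ q : ℚ, ∀ᵐ x ∂μ,
      ∫ x, g x ∂μ < q → ∀ᶠ n in atTop, birkhoffAverage ℝ T g n x < q := fun q =>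
    eventually_imp_distrib_left.2 (hT.ae_eventually_birkhoffAverage_lt hg hgi)
  have h_lower : ∀ q : ℚ, ∀ᵐ x ∂μ,
      (q : ℝ) < ∫ x, g x ∂μ → ∀ᶠ n in atTop, (q : ℝ) < birkhoffAverage ℝ T g n x := by
    refine fun q => eventually_imp_distrib_left.2 fun hq => ?_
    have := hT.ae_eventually_birkhoffAverage_lt hg.neg hgi.neg
      (a := -q) (by simpa [integral_neg] using hq)
    simpa [birkhoffAverage_neg] using this
  filter_upwards [ae_all_iff.2 h_upper, ae_all_iff.2 h_lower] with x h_upper h_lower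
  refine tendsto_order.2 ⟨fun a ha => ?_, fun a ha => ?_⟩
  · obtain ⟨q, haq, hq⟩ := exists_rat_btwn ha
    exact (h_lower q hq).mono fun n hn => haq.trans hn
  · obtain ⟨q, hq, hqa⟩ := exists_rat_btwn ha
    exact (h_upper q hq).mono fun n hn => hn.trans hqa

theorem Ergodic.exists_tendstoUniformlyOn_birkhoffAverage [IsProbabilityMeasure μ]
    (hT : Ergodic T μ) (hg : Measurable g) (hgi : Integrable g μ) {ε : ℝ} (hε : 0 < ε) :
    ∃ V, MeasurableSet V ∧ 1 - ε ≤ μ.real V ∧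
      TendstoUniformlyOn (birkhoffAverage ℝ T g) (fun _ => ∫ x, g x ∂μ) atTop V := by
  have h_meas : ∀ n, StronglyMeasurable (birkhoffAverage ℝ T g n) := fun n =>
    ((measurable_birkhoffSum hT.measurable hg n).const_smul (n : ℝ)⁻¹).stronglyMeasurable
  obtain ⟨t, ht, htε, h_unif⟩ := tendstoUniformlyOn_of_ae_tendsto' h_meas
    stronglyMeasurable_const (hT.ae_tendsto_birkhoffAverage hg hgi) hε
  refine ⟨tᶜ, ht.compl, ?_, h_unif⟩
  have htε' : μ.real t ≤ ε := ENNReal.toReal_le_of_le_ofReal hε.le htε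
  rw [probReal_compl_eq_one_sub ht]
  linarith

end ErgodicTheorem

section VisitCount

variable {X : Type*} {T : X → X} {g : X → ℝ}

lemma lt_birkhoffSum_add_sub_birkhoffSum {m l : ℕ} {x : X} {c δ : ℝ} (hm : 0 < m)
    (h_start : birkhoffAverage ℝ T g m x < c + δ)
    (h_end : c - δ < birkhoffAverage ℝ T g (m + l) x) :
    c * l - δ * (2 * m + l) < birkhoffSum T g (m + l) x - birkhoffSum T g m x := by
  have hm' : (0 : ℝ) < m := Nat.cast_pos.2 hm
  have hml : (0 : ℝ) < (m + l : ℕ) := Nat.cast_pos.2 (by omega)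
  rw [birkhoffAverage, smul_eq_mul, inv_mul_lt_iff₀ hm'] at h_start
  rw [birkhoffAverage, smul_eq_mul, lt_inv_mul_iff₀ hml] at h_end
  push_cast at h_end
  linarith

lemma natCast_card_filter_iterate_mem_Icc (T : X → X) (A : Set X) (x : X) (M L : ℕ) :
    (((Finset.Icc M (M + L)).filter (fun n => T^[n] x ∈ A)).card : ℝ) =
      birkhoffSum T (A.indicator 1) (M + (L + 1)) x - birkhoffSum T (A.indicator 1) M x := by
  rw [Finset.natCast_card_filter, birkhoffSum, birkhoffSum,
    ← Finset.sum_Ico_eq_sub _ (by omega), ← add_assoc, Finset.Ico_add_one_right_eq_Icc]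
  simp [Set.indicator_apply]

lemma lt_card_filter_iterate_mem_Icc {A : Set X} {x : X} {M L : ℕ} {c δ : ℝ} (hM : 0 < M)
    (h_start : |c - birkhoffAverage ℝ T (A.indicator 1) M x| < δ)
    (h_end : |c - birkhoffAverage ℝ T (A.indicator 1) (M + (L + 1)) x| < δ) :
    c * (L + 1) - δ * (2 * M + (L + 1)) <
      ((Finset.Icc M (M + L)).filter (fun n => T^[n] x ∈ A)).card := by
  have := lt_birkhoffSum_add_sub_birkhoffSum (l := L + 1) (c := c) (δ := δ) hM
    (by linarith [abs_lt.1 h_start]) (by linarith [abs_lt.1 h_end])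
  push_cast at this
  rwa [natCast_card_filter_iterate_mem_Icc]

end VisitCount

theorem uniform_visit_frequency {X : Type*} [MeasurableSpace X] (μ : Measure X)
    [IsProbabilityMeasure μ] (T : X → X) (hT : Ergodic T μ)
    (A : Set X) (hA : MeasurableSet A) (hAbig : μ A ≥ 1 - 1/10000)
    (κ : ℝ) (hκ : 0 < κ) :
    ∃ (V : Set X) (N₁ : ℕ), MeasurableSet V ∧ μ V > 99/100 ∧
      ∀ M L : ℕ, N₁ ≤ M → N₁ ≤ L → κ ≤ (L : ℝ) / (M : ℝ) → ∀ x ∈ V,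
        (0.99 : ℝ) ≤ (1 / (L : ℝ)) *
          ((Finset.Icc M (M + L)).filter (fun n => T^[n] x ∈ A)).card := by
  have hc : (9999 / 10000 : ℝ) ≤ μ.real A := by
    have := ENNReal.toReal_mono (measure_ne_top μ A) hAbig
    rw [ENNReal.toReal_sub_of_le (by norm_num) ENNReal.one_ne_top] at this
    norm_num at this ⊢
    exact this
  obtain ⟨V, hV, hVμ, h_unif⟩ := hT.exists_tendstoUniformlyOn_birkhoffAverage
    (measurable_one.indicator hA) ((integrable_const 1).indicator hA) (ε := 1 / 200) (by norm_num)
  rw [integral_indicator_one hA] at h_unif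
  -- chosen so that `δ * (2 * M + L + 1) ≤ L / 500` as soon as `κ * M ≤ L` and `1 ≤ L`
  set δ := κ / (1000 * (1 + κ)) with hδ
  obtain ⟨N₀, hN₀⟩ :=
    eventually_atTop.1 (Metric.tendstoUniformlyOn_iff.1 h_unif δ (by rw [hδ]; positivity))
  refine ⟨V, N₀ + 1, hV, ?_, fun M L hM hL hML x hx => ?_⟩
  · exact (ENNReal.toReal_lt_toReal (by simp [ENNReal.div_eq_top]) (measure_ne_top μ V)).1
      (by rw [← measureReal_def]; norm_num [ENNReal.toReal_div]; linarith)
  have h_window := lt_card_filter_iterate_mem_Icc (by omega)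
    (Real.dist_eq _ _ ▸ hN₀ M (by omega) x hx)
    (Real.dist_eq _ _ ▸ hN₀ (M + (L + 1)) (by omega) x hx)
  have hL₁ : (1 : ℝ) ≤ L := by exact_mod_cast (by omega : 1 ≤ L)
  have hM₀ : (0 : ℝ) < M := by exact_mod_cast (by omega : 0 < M)
  have hκM : κ * M ≤ L := by rwa [le_div_iff₀ hM₀] at hML
  have h_err : δ * (2 * M + (L + 1)) ≤ L / 500 := by
    rw [hδ, div_mul_eq_mul_div, div_le_div_iff₀ (by positivity) (by norm_num)]
    nlinarith
  have h_main : 9999 / 10000 * (L + 1) ≤ μ.real A * (L + 1) :=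
    mul_le_mul_of_nonneg_right hc (by positivity)
  rw [one_div, inv_mul_eq_div, le_div_iff₀ (by linarith)]
  linarith
end
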